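/- Uniform sample neighborhood count lemma. Let X_1,…,X_m be independent random variables, each uniformly distributed on [0,1). Fix constants C, C1 > 0 and set Δ = [C + (C1+4)^{1/2}] (m^{−1} log m)^{1/2}. Let I_1,…,I_R be a partition of [0,1) into intervals each of length at least 2Δ, and write I(X_i) for the partition interval containing X_i. Then, for all sufficiently large m (depending only on C and C1), with probability at least 1 − 2 m^{−C1/4}: for every i ∈ {1,…,m}, #{ i' : X_{i'} ∈ [X_i − Δ, X_i + Δ] ∩ I(X_i) } ≥ C (m log m)^{1/2}. -/

import Mathlib

/-! Cover each cell `I_r` by grid windows `[kΔ, (k+1)Δ)`, `k < m`, each pushed inside the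
cell. A point `x ∈ I_r` lies in one of them, and that window sits inside
`[x - Δ, x + Δ] ∩ I_r`, so it suffices that every window contains at least
`C √(m log m)` sample points. The count in a window is `Bin(m, Δ)` with mean
`mΔ = (C + √(C1 + 4)) √(m log m)`, so by Hoeffding's inequality it falls below
`C √(m log m)` with probability at most `m^{-2(C1 + 4)}`. Since the cells have length
`≥ 2Δ ≥ 2/m`, there are `R ≤ m` of them, and a union bound over the `R m ≤ m²` windows
finishes the proof. -/

/-- A partition of `[0,1)` into `R` consecutive intervals
`I_r = [cut r, cut (r+1))`, determined by strictly increasing cut points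
`0 = cut 0 < cut 1 < ⋯ < cut R = 1`. -/
structure IntervalPartition (R : ℕ) where
  cut : Fin (R + 1) → ℝ
  mono : StrictMono cut
  first : cut 0 = 0
  last : cut (Fin.last R) = 1

/-- The `r`-th interval `I_r = [cut r, cut (r+1))` of the partition. -/
def IntervalPartition.cell {R : ℕ} (p : IntervalPartition R) (r : Fin R) : Set ℝ :=
  Set.Ico (p.cut r.castSucc) (p.cut r.succ)

/-- The length of the `r`-th interval of the partition. -/
def IntervalPartition.len {R : ℕ} (p : IntervalPartition R) (r : Fin R) : ℝ :=
  p.cut r.succ - p.cut r.castSucc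

/-- `x` and `y` lie in the same interval of the partition. -/
def IntervalPartition.sameCell {R : ℕ} (p : IntervalPartition R) (x y : ℝ) : Prop :=
  ∃ r : Fin R, x ∈ p.cell r ∧ y ∈ p.cell r

/-- **Assumption 1** (piecewise Lipschitz graphon): on every cell `I_r × I_s × J_t`,
`f` is `Ln`-Lipschitz in each of its first two arguments and `LK`-Lipschitz in its
third argument. -/
def PiecewiseLipschitz {R T : ℕ} (f : ℝ → ℝ → ℝ → ℝ) (Ln LK : ℝ)
    (pI : IntervalPartition R) (pJ : IntervalPartition T) : Prop :=
  ∀ (r s : Fin R) (t : Fin T),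
    (∀ u u' v w, u ∈ pI.cell r → u' ∈ pI.cell r → v ∈ pI.cell s → w ∈ pJ.cell t →
      |f u v w - f u' v w| ≤ Ln * |u - u'|) ∧
    (∀ u v v' w, u ∈ pI.cell r → v ∈ pI.cell s → v' ∈ pI.cell s → w ∈ pJ.cell t →
      |f u v w - f u v' w| ≤ Ln * |v - v'|) ∧
    (∀ u v w w', u ∈ pI.cell r → v ∈ pI.cell s → w ∈ pJ.cell t → w' ∈ pJ.cell t →
      |f u v w - f u v w'| ≤ LK * |w - w'|)

open MeasureTheory ProbabilityTheory

/-- The neighborhood radius `Δ = [C + (C1+4)^{1/2}] (m⁻¹ log m)^{1/2}`. -/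
noncomputable def nbhdRadius (C C1 : ℝ) (m : ℕ) : ℝ :=
  (C + Real.sqrt (C1 + 4)) * Real.sqrt (Real.log m / m)

open Set

theorem Fin.sum_succ_sub_castSucc {M : Type*} [AddCommGroup M] {n : ℕ} (f : Fin (n + 1) → M) :
    ∑ i : Fin n, (f i.succ - f i.castSucc) = f (Fin.last n) - f 0 := by
  induction n with
  | zero => simp
  | succ n ih =>
    rw [Fin.sum_univ_castSucc]
    simp only [Fin.succ_castSucc]
    rw [ih (fun j => f j.castSucc)]
    simp only [Fin.succ_last, Fin.castSucc_zero]
    abel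

theorem mul_sqrt_div_self {x : ℝ} (hx : 0 ≤ x) (y : ℝ) : x * √(y / x) = √(x * y) := by
  rcases hx.eq_or_lt with rfl | hx
  · simp
  calc x * √(y / x) = √(x ^ 2) * √(y / x) := by rw [Real.sqrt_sq hx.le]
    _ = √(x * y) := by rw [← Real.sqrt_mul (sq_nonneg x)]; congr 1; field_simp

theorem mul_mul_exp_neg_mul_log_le {R m c : ℝ} (hR : R ≤ m) (hm : 1 ≤ m) (hc : 0 ≤ c) :
    R * m * Real.exp (-2 * (c + 4) * Real.log m) ≤ 2 * m ^ (-(c / 4)) := by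
  have hm0 : 0 < m := by linarith
  rw [show -2 * (c + 4) * Real.log m = Real.log m * (-2 * (c + 4)) by ring,
    ← Real.rpow_def_of_pos hm0]
  calc R * m * m ^ (-2 * (c + 4)) ≤ m * m * m ^ (-2 * (c + 4)) := by gcongr
    _ = m ^ (2 + -2 * (c + 4)) := by rw [Real.rpow_add hm0, Real.rpow_two]; ring
    _ ≤ m ^ (-(c / 4)) := Real.rpow_le_rpow_of_exponent_le hm (by linarith)
    _ ≤ 2 * m ^ (-(c / 4)) := by linarith [Real.rpow_nonneg hm0.le (-(c / 4))]

theorem one_sub_measureReal_le_of_ae {Ω : Type*} [MeasurableSpace Ω] {μ : Measure Ω}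
    [IsProbabilityMeasure μ] {S B : Set Ω} (h : ∀ᵐ ω ∂μ, ω ∉ B → ω ∈ S) :
    1 - μ.real B ≤ μ.real S := by
  have hfull : ∀ᵐ ω ∂μ, ω ∈ S ∪ B := h.mono fun ω hω => by
    by_cases hB : ω ∈ B
    exacts [Or.inr hB, Or.inl (hω hB)]
  have hunion : μ.real (S ∪ B) = 1 :=
    (measureReal_congr (Filter.eventuallyEq_univ.mpr hfull)).trans probReal_univ
  linarith [measureReal_union_le (μ := μ) S B]

theorem measureReal_ncard_le_le_of_iIndepFun {Ω α ι : Type*} [MeasurableSpace Ω]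
    [MeasurableSpace α] [Fintype ι] {μ : Measure Ω} [IsProbabilityMeasure μ]
    {X : ι → Ω → α} (hX : ∀ i, Measurable (X i)) (hindep : iIndepFun X μ)
    {J : Set α} (hJ : MeasurableSet J) {p : ℝ} (hp : ∀ i, μ.real (X i ⁻¹' J) = p)
    {t : ℝ} (ht : 0 ≤ t) :
    μ.real {ω | ({i | X i ω ∈ J}.ncard : ℝ) ≤ Fintype.card ι * p - t} ≤
      Real.exp (-2 * t ^ 2 / Fintype.card ι) := by
  classical
  set f : α → ℝ := J.indicator 1
  have hf : Measurable f := measurable_one.indicator hJ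
  -- Hoeffding's lemma: `p - 1_J (X i)` is centred and ranges over an interval of length `1`.
  have hsubG : ∀ i ∈ (Finset.univ : Finset ι),
      HasSubgaussianMGF ((fun x => p - f x) ∘ X i) ((‖(1 : ℝ) - 0‖₊ / 2) ^ 2) μ := by
    intro i _
    have hmean : ∫ ω, f (X i ω) ∂μ = p := by
      rw [← hp i, ← integral_indicator_one ((hX i) hJ)]; rfl
    refine (hasSubgaussianMGF_of_mem_Icc (hf.comp (hX i)).aemeasurable
      (ae_of_all _ fun ω => ?_)).neg.congr (ae_of_all _ fun ω => ?_)
    · by_cases h : X i ω ∈ J <;> simp [f, h]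
    · simp [hmean]
  have hcount : ∀ ω, ∑ i, ((fun x => p - f x) ∘ X i) ω =
      Fintype.card ι * p - {i | X i ω ∈ J}.ncard := by
    intro ω
    simp [f, Finset.sum_sub_distrib, Set.indicator_apply, Set.ncard_eq_toFinset_card']
  have h := HasSubgaussianMGF.measure_sum_ge_le_of_iIndepFun
    (hindep.comp (fun _ x => p - f x) fun _ => measurable_const.sub hf) hsubG ht
  simp only [hcount] at h
  convert h using 2
  · ext ω
    exact le_sub_comm (α := ℝ)
  · norm_num
    ring

theorem Ico_max_min_subset {a b s Δ : ℝ} (h : a + Δ ≤ b) :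
    Ico (max a (min s (b - Δ))) (max a (min s (b - Δ)) + Δ) ⊆ Ico a b :=
  Ico_subset_Ico (le_max_left _ _) (by
    have : max a (min s (b - Δ)) ≤ b - Δ := max_le (by linarith) (min_le_right _ _)
    linarith)

theorem mem_Ico_max_min {a b s Δ x : ℝ} (hx : x ∈ Ico a b) (hs : x ∈ Ico s (s + Δ)) :
    x ∈ Ico (max a (min s (b - Δ))) (max a (min s (b - Δ)) + Δ) := by
  constructor
  · exact max_le hx.1 ((min_le_left _ _).trans hs.1)
  · have : min s (b - Δ) + Δ = min (s + Δ) b := by rw [← min_add_add_right, sub_add_cancel]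
    linarith [lt_min hs.2 hx.2, le_max_right a (min s (b - Δ))]

theorem Ico_subset_Icc_sub_add_of_mem {s Δ x : ℝ} (hx : x ∈ Ico s (s + Δ)) :
    Ico s (s + Δ) ⊆ Icc (x - Δ) (x + Δ) := fun _ hy =>
  ⟨by linarith [hx.2, hy.1], by linarith [hx.1, hy.2]⟩

namespace IntervalPartition

variable {R : ℕ} (p : IntervalPartition R)

theorem cut_nonneg (j : Fin (R + 1)) : 0 ≤ p.cut j :=
  p.first ▸ p.mono.monotone (Fin.zero_le j)

theorem cut_le_one (j : Fin (R + 1)) : p.cut j ≤ 1 :=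
  p.last ▸ p.mono.monotone (Fin.le_last j)

theorem cell_subset_Ico (r : Fin R) : p.cell r ⊆ Ico 0 1 :=
  Ico_subset_Ico (p.cut_nonneg _) (p.cut_le_one _)

theorem exists_mem_cell {x : ℝ} (hx : x ∈ Ico (0 : ℝ) 1) : ∃ r, x ∈ p.cell r := by
  by_contra! hx_notin
  have hcut_le : ∀ j, p.cut j ≤ x := by
    intro j
    induction j using Fin.induction with
    | zero => exact p.first ▸ hx.1
    | succ r ih => exact not_lt.mp fun hlt => hx_notin r ⟨ih, hlt⟩
  exact (p.last ▸ hcut_le (Fin.last R)).not_gt hx.2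

theorem sum_len : ∑ r, p.len r = 1 := by
  simp only [len, Fin.sum_succ_sub_castSucc, p.first, p.last, sub_zero]

theorem card_mul_le_one {l : ℝ} (hl : ∀ r, l ≤ p.len r) : R * l ≤ 1 := by
  simpa using (Finset.card_nsmul_le_sum Finset.univ p.len l fun r _ => hl r).trans p.sum_len.le

/-- The grid window `[kΔ, kΔ + Δ)`, pushed inside the cell `I_r`. -/
noncomputable def window (Δ : ℝ) (r : Fin R) (k : ℕ) : Set ℝ :=
  Ico (max (p.cut r.castSucc) (min (k * Δ) (p.cut r.succ - Δ)))
    (max (p.cut r.castSucc) (min (k * Δ) (p.cut r.succ - Δ)) + Δ)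

theorem window_subset_cell {Δ : ℝ} {r : Fin R} (h : Δ ≤ p.len r) (k : ℕ) :
    p.window Δ r k ⊆ p.cell r :=
  Ico_max_min_subset (by rw [len] at h; linarith)

theorem mem_window_floor {Δ x : ℝ} (hΔ : 0 < Δ) {r : Fin R} (hx : x ∈ p.cell r) :
    x ∈ p.window Δ r ⌊x / Δ⌋₊ := by
  have hx0 : 0 ≤ x / Δ := div_nonneg (p.cell_subset_Ico r hx).1 hΔ.le
  refine mem_Ico_max_min hx ⟨?_, ?_⟩
  · exact (le_div_iff₀ hΔ).mp (Nat.floor_le hx0)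
  · rw [← add_one_mul]; exact (div_lt_iff₀ hΔ).mp (Nat.lt_floor_add_one _)

theorem measurableSet_window (Δ : ℝ) (r : Fin R) (k : ℕ) : MeasurableSet (p.window Δ r k) :=
  measurableSet_Ico

theorem volume_real_window {Δ : ℝ} (hΔ : 0 ≤ Δ) (r : Fin R) (k : ℕ) :
    volume.real (p.window Δ r k) = Δ := by
  simp [window, Real.volume_real_Ico, hΔ]

theorem le_ncard_nbhd_of_le_ncard_window {ι : Type*} [Finite ι] {y : ι → ℝ}
    (hy : ∀ i, y i ∈ Ico (0 : ℝ) 1) {Δ : ℝ} (hΔ : 0 < Δ) (hlen : ∀ r, Δ ≤ p.len r) {K : ℕ}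
    (hK : 1 ≤ K * Δ) {T : ℝ} (hT : ∀ r, ∀ k : Fin K, T ≤ {i | y i ∈ p.window Δ r k}.ncard)
    (i : ι) :
    T ≤ {i' | y i' ∈ Icc (y i - Δ) (y i + Δ) ∧ p.sameCell (y i) (y i')}.ncard := by
  obtain ⟨r, hr⟩ := p.exists_mem_cell (hy i)
  have hk : ⌊y i / Δ⌋₊ < K :=
    (Nat.floor_lt (div_nonneg (hy i).1 hΔ.le)).mpr ((div_lt_iff₀ hΔ).mpr (by linarith [(hy i).2]))
  have hmem := p.mem_window_floor hΔ hr
  refine (hT r ⟨_, hk⟩).trans (Nat.cast_le.mpr (ncard_le_ncard (fun i' hi' => ?_) (toFinite _)))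
  exact ⟨Ico_subset_Icc_sub_add_of_mem hmem hi', r, hr, p.window_subset_cell (hlen r) _ hi'⟩

theorem measureReal_exists_window_ncard_le_le {Ω ι : Type*} [MeasurableSpace Ω]
    {μ : Measure Ω} [IsProbabilityMeasure μ] [Fintype ι] {X : ι → Ω → ℝ}
    (hX : ∀ i, Measurable (X i)) (hunif : ∀ i, μ.map (X i) = volume.restrict (Ico (0 : ℝ) 1))
    (hindep : iIndepFun X μ) {Δ : ℝ} (hΔ : 0 ≤ Δ) (hlen : ∀ r, Δ ≤ p.len r) (K : ℕ) {t : ℝ}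
    (ht : 0 ≤ t) :
    μ.real {ω | ∃ r, ∃ k : Fin K,
        ({i | X i ω ∈ p.window Δ r k}.ncard : ℝ) ≤ Fintype.card ι * Δ - t} ≤
      R * K * Real.exp (-2 * t ^ 2 / Fintype.card ι) := by
  have hwindow : ∀ (rk : Fin R × Fin K) i, μ.real (X i ⁻¹' p.window Δ rk.1 rk.2) = Δ := by
    intro rk i
    rw [← map_measureReal_apply (hX i) (p.measurableSet_window _ _ _), hunif,
      measureReal_restrict_apply (p.measurableSet_window _ _ _),
      inter_eq_left.mpr ((p.window_subset_cell (hlen _) _).trans (p.cell_subset_Ico _)),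
      p.volume_real_window hΔ]
  have hunion : {ω | ∃ r, ∃ k : Fin K,
        ({i | X i ω ∈ p.window Δ r k}.ncard : ℝ) ≤ Fintype.card ι * Δ - t} =
      ⋃ rk : Fin R × Fin K,
        {ω | ({i | X i ω ∈ p.window Δ rk.1 rk.2}.ncard : ℝ) ≤ Fintype.card ι * Δ - t} := by
    ext ω; simp
  rw [hunion]
  refine (measureReal_iUnion_fintype_le _).trans ?_
  refine (Finset.sum_le_sum fun rk _ => measureReal_ncard_le_le_of_iIndepFun hX hindep
    (p.measurableSet_window _ _ _) (hwindow rk) ht).trans_eq ?_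
  simp [mul_assoc]

end IntervalPartition

theorem natCast_mul_nbhdRadius (C C1 : ℝ) (m : ℕ) :
    m * nbhdRadius C C1 m = (C + √(C1 + 4)) * √(m * Real.log m) := by
  rw [nbhdRadius, mul_left_comm, mul_sqrt_div_self (Nat.cast_nonneg m)]

theorem one_le_natCast_mul_nbhdRadius {C C1 : ℝ} (hC : 0 ≤ C) (hC1 : 0 ≤ C1) {m : ℕ}
    (hm : 3 ≤ m) : 1 ≤ m * nbhdRadius C C1 m := by
  have hm3 : (3 : ℝ) ≤ m := by exact_mod_cast hm
  have hL : 1 ≤ Real.log m :=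
    (Real.le_log_iff_exp_le (by linarith)).mpr (by linarith [Real.exp_one_lt_d9])
  have hb : 2 ≤ √(C1 + 4) := Real.le_sqrt_of_sq_le (by linarith)
  have hs : 1 ≤ √(m * Real.log m) := Real.one_le_sqrt.mpr (by nlinarith)
  rw [natCast_mul_nbhdRadius]
  nlinarith

/-- **Uniform sample neighborhood count lemma.**
Let `X 1, …, X m` be i.i.d. uniform on `[0,1)`, `Δ = [C + (C1+4)^{1/2}](m⁻¹ log m)^{1/2}`,
and let the partition intervals all have length at least `2Δ`. Then for all sufficiently
large `m`, with probability at least `1 − 2 m^{−C1/4}`, for every `i` the number of points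
`X i'` lying in `[X i − Δ, X i + Δ] ∩ I(X i)` is at least `C (m log m)^{1/2}`. -/
theorem uniform_sample_neighborhood_count (C C1 : ℝ) (hC : 0 < C) (hC1 : 0 < C1) :
    ∃ M0 : ℕ, ∀ m : ℕ, M0 ≤ m →
    ∀ {Ω : Type} [MeasurableSpace Ω] (μ : Measure Ω) [IsProbabilityMeasure μ]
      (X : Fin m → Ω → ℝ),
      (∀ i, Measurable (X i)) →
      (∀ i, Measure.map (X i) μ = volume.restrict (Set.Ico (0 : ℝ) 1)) →
      iIndepFun X μ →
    ∀ (R : ℕ) (pI : IntervalPartition R),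
      (∀ r : Fin R, 2 * nbhdRadius C C1 m ≤ pI.len r) →
    ENNReal.ofReal (1 - 2 * (m : ℝ) ^ (-(C1 / 4))) ≤
      μ {ω | ∀ i : Fin m,
        C * Real.sqrt (m * Real.log m) ≤
          (Set.ncard {i' : Fin m |
            X i' ω ∈ Set.Icc (X i ω - nbhdRadius C C1 m) (X i ω + nbhdRadius C C1 m) ∧
            pI.sameCell (X i ω) (X i' ω)} : ℝ)} := by
  refine ⟨3, fun m hm Ω _ μ _ X hX hunif hindep R pI hlen => ?_⟩
  have hm1 : (1 : ℝ) ≤ m := by exact_mod_cast (by omega : 1 ≤ m)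
  set Δ := nbhdRadius C C1 m
  set b := √(C1 + 4)
  set s := √(m * Real.log m)
  have hK : 1 ≤ m * Δ := one_le_natCast_mul_nbhdRadius hC.le hC1.le hm
  have hΔ : 0 < Δ := pos_of_mul_pos_right (by linarith) (Nat.cast_nonneg m)
  have hlen' : ∀ r, Δ ≤ pI.len r := fun r => by linarith [hlen r]
  have hRm : (R : ℝ) ≤ m :=
    le_of_mul_le_mul_right (by linarith [pI.card_mul_le_one hlen]) hΔ
  have hexp : -2 * (b * s) ^ 2 / Fintype.card (Fin m) = -2 * (C1 + 4) * Real.log m := by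
    have : 0 ≤ Real.log m := Real.log_nonneg hm1
    rw [Fintype.card_fin, mul_pow, Real.sq_sqrt (by linarith), Real.sq_sqrt (by positivity)]
    field_simp
  have hbad := pI.measureReal_exists_window_ncard_le_le hX hunif hindep hΔ.le hlen' m
    (by positivity : 0 ≤ b * s)
  rw [hexp, Fintype.card_fin] at hbad
  set bad := {ω | ∃ r, ∃ k : Fin m,
    ({i | X i ω ∈ pI.window Δ r k}.ncard : ℝ) ≤ m * Δ - b * s}
  have hsupport : ∀ᵐ ω ∂μ, ∀ i, X i ω ∈ Ico (0 : ℝ) 1 := ae_all_iff.mpr fun i =>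
    ae_of_ae_map (hX i).aemeasurable (hunif i ▸ ae_restrict_mem measurableSet_Ico)
  rw [← ofReal_measureReal]
  refine ENNReal.ofReal_le_ofReal (le_trans ?_ (one_sub_measureReal_le_of_ae (B := bad)
    (hsupport.mono fun ω hω hgood =>
      pI.le_ncard_nbhd_of_le_ncard_window hω hΔ hlen' hK fun r k => ?_)))
  · linarith [mul_mul_exp_neg_mul_log_le hRm hm1 hC1.le]
  · linarith [natCast_mul_nbhdRadius C C1 m, not_le.mp fun h => hgood ⟨r, k, h⟩]
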